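/- There exists an absolute constant c > 0 such that the following holds for every integer k ≥ 2. Let V be a finite set and let 𝒞 be a finite family of constraints, each constraint C having a variable set vbl(C) ⊆ V with |vbl(C)| = k, such that each constraint shares a variable with at most Δ constraints in total (including itself). If Δ ≤ c·2^{0.1742·k}/k², then there exists a subset V₁ ⊆ V such that for every C ∈ 𝒞, |V₁ ∩ vbl(C)| ≥ 0.1742·k and |vbl(C) ∖ V₁| ≥ 0.3484·k. -/

import Mathlib

/-!
Mark every variable independently with probability `0.405`. A Chernoff bound (the moment
generating function evaluated at `t = 0.31`, resp. `t = 2.75`) shows that a constraint gets fewer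
than `0.1742·k` marked or fewer than `0.3484·k` unmarked variables with probability at most
`p = 2·2^{-0.1742·k}`. This failure event only depends on the marks inside `vbl(C)`, so failure
events of constraints with disjoint variable sets are independent, and the symmetric Lovász Local
Lemma yields a marking avoiding all of them once `4pΔ ≤ 1`; the hypothesis on `Δ` gives this
with `c = 1/8`.
-/

open Finset

section SumBounds

variable {α ι M : Type*} [DecidableEq α] [AddCommMonoid M] [PartialOrder M]
  [IsOrderedAddMonoid M] {W : α → M}

theorem Finset.sum_union_le_of_nonneg (hW : ∀ x, 0 ≤ W x) (s t : Finset α) :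
    ∑ x ∈ s ∪ t, W x ≤ ∑ x ∈ s, W x + ∑ x ∈ t, W x := by
  rw [← sum_union_inter]
  exact le_add_of_nonneg_right (sum_nonneg fun x _ => hW x)

theorem Finset.sum_biUnion_le_of_nonneg (hW : ∀ x, 0 ≤ W x) (s : Finset ι)
    (t : ι → Finset α) :
    ∑ x ∈ s.biUnion t, W x ≤ ∑ i ∈ s, ∑ x ∈ t i, W x := by
  classical
  induction s using Finset.induction_on with
  | empty => simp
  | insert i s hi ih =>
    rw [biUnion_insert, sum_insert hi]
    exact (sum_union_le_of_nonneg hW _ _).trans (add_le_add_right ih _)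

end SumBounds

namespace LovaszLocal

variable {Ω ι : Type*} [Fintype Ω] [DecidableEq Ω]

def avoiding (A : ι → Finset Ω) (S : Finset ι) : Finset Ω :=
  {ω | ∀ j ∈ S, ω ∉ A j}

variable {A : ι → Finset Ω} {W : Ω → ℝ}

theorem avoiding_anti {S T : Finset ι} (h : T ⊆ S) : avoiding A S ⊆ avoiding A T := by
  intro ω hω
  simp only [avoiding, mem_filter, mem_univ, true_and] at hω ⊢
  exact fun j hj => hω j (h hj)

theorem avoiding_subset_union [DecidableEq ι] (S T : Finset ι) :
    avoiding A T ⊆ avoiding A S ∪ (S \ T).biUnion fun j => A j ∩ avoiding A T := by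
  intro ω hω
  by_cases hS : ω ∈ avoiding A S
  · exact mem_union_left _ hS
  · simp only [avoiding, mem_filter, mem_univ, true_and, not_forall, not_not] at hS hω
    obtain ⟨j, hjS, hjA⟩ := hS
    refine mem_union_right _
      (mem_biUnion.mpr ⟨j, mem_sdiff.mpr ⟨hjS, fun hjT => hω j hjT hjA⟩, ?_⟩)
    simpa [avoiding, hjA] using hω

theorem sum_avoiding_le_add [DecidableEq ι] (hW : ∀ ω, 0 ≤ W ω) (S T : Finset ι) :
    ∑ ω ∈ avoiding A T, W ω ≤
      ∑ ω ∈ avoiding A S, W ω + ∑ j ∈ S \ T, ∑ ω ∈ A j ∩ avoiding A T, W ω :=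
  calc ∑ ω ∈ avoiding A T, W ω
      ≤ ∑ ω ∈ avoiding A S ∪ (S \ T).biUnion fun j => A j ∩ avoiding A T, W ω :=
        sum_le_sum_of_subset_of_nonneg (avoiding_subset_union S T) fun ω _ _ => hW ω
    _ ≤ _ :=
        (sum_union_le_of_nonneg hW _ _).trans (add_le_add_right (sum_biUnion_le_of_nonneg hW _ _) _)

theorem avoiding_insert [DecidableEq ι] (i : ι) (S : Finset ι) :
    avoiding A (insert i S) = avoiding A S \ (A i ∩ avoiding A S) := by
  ext ω
  simp only [avoiding, mem_filter, mem_univ, true_and, mem_sdiff, mem_inter, forall_mem_insert]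
  tauto

theorem sum_avoiding_insert [DecidableEq ι] (i : ι) (S : Finset ι) :
    ∑ ω ∈ avoiding A (insert i S), W ω =
      ∑ ω ∈ avoiding A S, W ω - ∑ ω ∈ A i ∩ avoiding A S, W ω := by
  rw [avoiding_insert, sum_sdiff_eq_sub inter_subset_right]

variable {N : ι → Finset ι} {p : ℝ} {D : ℕ}

/- Dropping the events of `S` that are neighbours of `i` costs at most a factor `2` in mass (union
bound plus the induction hypothesis, since there are at most `D` of them); what remains is
independent of `A i`. -/
theorem sum_inter_avoiding_le_two_mul [DecidableEq ι] (hW : ∀ ω, 0 ≤ W ω) (hp : 0 ≤ p)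
    (hN : ∀ i, #(N i) ≤ D) (hpD : 4 * p * D ≤ 1)
    (hA : ∀ i S, Disjoint S (N i) →
      ∑ ω ∈ A i ∩ avoiding A S, W ω ≤ p * ∑ ω ∈ avoiding A S, W ω)
    (S : Finset ι) (i : ι) :
    ∑ ω ∈ A i ∩ avoiding A S, W ω ≤ 2 * p * ∑ ω ∈ avoiding A S, W ω := by
  induction S using Finset.strongInduction generalizing i with
  | H S ih =>
  set T := S \ N i
  have hTS : T ⊆ S := sdiff_subset
  have hcard : (#(S \ T) : ℝ) ≤ D := by
    rw [sdiff_sdiff_right_self]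
    exact_mod_cast (card_le_card inter_subset_right).trans (hN i)
  have hneighbours : ∑ j ∈ S \ T, ∑ ω ∈ A j ∩ avoiding A T, W ω ≤
      #(S \ T) * (2 * p * ∑ ω ∈ avoiding A T, W ω) := by
    rw [← nsmul_eq_mul, ← sum_const]
    exact sum_le_sum fun j hj => ih T ((ssubset_iff_of_subset hTS).mpr ⟨j, mem_sdiff.mp hj⟩) j
  have hT : ∑ ω ∈ avoiding A T, W ω ≤ 2 * ∑ ω ∈ avoiding A S, W ω := by
    have h0 : 0 ≤ ∑ ω ∈ avoiding A T, W ω := sum_nonneg fun ω _ => hW ω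
    have hhalf : (#(S \ T) : ℝ) * (2 * p * ∑ ω ∈ avoiding A T, W ω) ≤
        1 / 2 * ∑ ω ∈ avoiding A T, W ω :=
      calc (#(S \ T) : ℝ) * (2 * p * ∑ ω ∈ avoiding A T, W ω)
          ≤ D * (2 * p * ∑ ω ∈ avoiding A T, W ω) :=
            mul_le_mul_of_nonneg_right hcard (by positivity)
        _ ≤ 1 / 2 * ∑ ω ∈ avoiding A T, W ω := by nlinarith
    linarith [sum_avoiding_le_add hW (A := A) S T]
  calc ∑ ω ∈ A i ∩ avoiding A S, W ω
      ≤ ∑ ω ∈ A i ∩ avoiding A T, W ω :=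
        sum_le_sum_of_subset_of_nonneg (inter_subset_inter_left (avoiding_anti hTS))
          fun ω _ _ => hW ω
    _ ≤ p * ∑ ω ∈ avoiding A T, W ω := hA i T sdiff_disjoint
    _ ≤ 2 * p * ∑ ω ∈ avoiding A S, W ω := by nlinarith

theorem exists_forall_notMem [Fintype ι] [DecidableEq ι] (hW : ∀ ω, 0 ≤ W ω) (hp : 0 ≤ p)
    (hmem : ∀ i, i ∈ N i) (hN : ∀ i, #(N i) ≤ D) (hpD : 4 * p * D ≤ 1)
    (hA : ∀ i S, Disjoint S (N i) →
      ∑ ω ∈ A i ∩ avoiding A S, W ω ≤ p * ∑ ω ∈ avoiding A S, W ω)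
    (hpos : 0 < ∑ ω, W ω) :
    ∃ ω, ∀ i, ω ∉ A i := by
  have hmass : ∀ S : Finset ι, 0 < ∑ ω ∈ avoiding A S, W ω := by
    intro S
    induction S using Finset.induction_on with
    | empty => simpa [avoiding] using hpos
    | insert i S _ ih =>
      have hpi : 2 * p ≤ 1 / 2 := by
        have : (1 : ℝ) ≤ D := by exact_mod_cast (card_pos.mpr ⟨i, hmem i⟩).trans_le (hN i)
        nlinarith
      rw [sum_avoiding_insert]
      nlinarith [sum_inter_avoiding_le_two_mul hW hp hN hpD hA S i]
  obtain ⟨ω, hω⟩ := nonempty_of_sum_ne_zero (hmass univ).ne'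
  exact ⟨ω, by simpa [avoiding] using hω⟩

end LovaszLocal

section BernoulliWeight

variable {V : Type*} [Fintype V] {q : ℝ}

def bernoulliWeight (q : ℝ) (f : V → Bool) : ℝ := ∏ v, if f v then q else 1 - q

theorem bernoulliWeight_nonneg (hq₀ : 0 ≤ q) (hq₁ : q ≤ 1) (f : V → Bool) :
    0 ≤ bernoulliWeight q f :=
  prod_nonneg fun v _ => by split <;> linarith

theorem sum_prod_apply_bool {R : Type*} [DecidableEq V] [CommSemiring R] (g : V → Bool → R) :
    ∑ f : V → Bool, ∏ v, g v (f v) = ∏ v, (g v true + g v false) := by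
  simp only [← Fintype.sum_bool, Fintype.prod_sum]

theorem sum_bernoulliWeight [DecidableEq V] (q : ℝ) :
    ∑ f : V → Bool, bernoulliWeight q f = 1 :=
  (sum_prod_apply_bool fun _ b => if b then q else 1 - q).trans (by simp)

theorem sum_pow_card_filter_mul_bernoulliWeight [DecidableEq V] (q t : ℝ) (T : Finset V) :
    ∑ f : V → Bool, t ^ #{v ∈ T | f v} * bernoulliWeight q f = (q * t + (1 - q)) ^ #T := by
  have key : ∀ f : V → Bool, t ^ #{v ∈ T | f v} * bernoulliWeight q f =
      ∏ v, (if v ∈ T ∧ f v then t else 1) * (if f v then q else 1 - q) := by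
    intro f
    rw [prod_mul_distrib, bernoulliWeight, ← prod_filter, prod_const]
    congr 3
    ext v
    simp
  rw [sum_congr rfl fun f _ => key f,
    sum_prod_apply_bool fun v b => (if v ∈ T ∧ b then t else 1) * (if b then q else 1 - q)]
  calc _ = ∏ v, if v ∈ T then q * t + (1 - q) else 1 :=
        prod_congr rfl fun v _ => by by_cases hv : v ∈ T <;> simp [hv, mul_comm]
    _ = (q * t + (1 - q)) ^ #T := by rw [prod_ite_mem, univ_inter, prod_const]

theorem bernoulliWeight_piecewise_mul [DecidableEq V] (q : ℝ) (T : Finset V) (f g : V → Bool) :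
    bernoulliWeight q (T.piecewise f g) * bernoulliWeight q (T.piecewise g f) =
      bernoulliWeight q f * bernoulliWeight q g := by
  simp only [bernoulliWeight, ← prod_mul_distrib]
  refine prod_congr rfl fun v _ => ?_
  by_cases hv : v ∈ T <;> simp [hv, mul_comm]

theorem sum_inter_bernoulliWeight [DecidableEq V] {T : Finset V} {E F : Finset (V → Bool)}
    (hE : DependsOn (· ∈ E) (T : Set V)) (hF : DependsOn (· ∈ F) (T : Set V)ᶜ) :
    ∑ f ∈ E ∩ F, bernoulliWeight q f =
      (∑ f ∈ E, bernoulliWeight q f) * ∑ f ∈ F, bernoulliWeight q f := by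
  have swap : ∀ f g : V → Bool, T.piecewise (T.piecewise f g) (T.piecewise g f) = f := by
    intro f g; ext v; by_cases hv : v ∈ T <;> simp [hv]
  have onT : ∀ f g : V → Bool, ∀ v ∈ (T : Set V), T.piecewise f g v = f v :=
    fun f g v hv => piecewise_eq_of_mem _ _ _ hv
  have offT : ∀ f g : V → Bool, ∀ v ∈ (T : Set V)ᶜ, T.piecewise f g v = g v :=
    fun f g v hv => piecewise_eq_of_notMem _ _ _ hv
  calc ∑ f ∈ E ∩ F, bernoulliWeight q f
      = ∑ fg ∈ (E ∩ F) ×ˢ (univ : Finset (V → Bool)),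
          bernoulliWeight q fg.1 * bernoulliWeight q fg.2 := by
        simp only [sum_product, ← mul_sum, sum_bernoulliWeight, mul_one]
    _ = ∑ fg ∈ E ×ˢ F, bernoulliWeight q fg.1 * bernoulliWeight q fg.2 := by
        -- swapping the coordinates in `T` is a weight-preserving involution carrying `E ×ˢ F`
        -- onto `(E ∩ F) ×ˢ univ`
        let σ : (V → Bool) × (V → Bool) → (V → Bool) × (V → Bool) :=
          fun fg => (T.piecewise fg.1 fg.2, T.piecewise fg.2 fg.1)
        refine sum_nbij' σ σ ?_ ?_ ?_ ?_ ?_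
        · rintro ⟨f, g⟩ h
          simp only [mem_product, mem_inter, mem_univ, and_true] at h ⊢
          exact ⟨(hE (onT f g)).mpr h.1, (hF (offT g f)).mpr h.2⟩
        · rintro ⟨f, g⟩ h
          simp only [mem_product, mem_inter, mem_univ, and_true] at h ⊢
          exact ⟨(hE (onT f g)).mpr h.1, (hF (offT f g)).mpr h.2⟩
        · rintro ⟨f, g⟩ -; exact Prod.ext (swap f g) (swap g f)
        · rintro ⟨f, g⟩ -; exact Prod.ext (swap f g) (swap g f)
        · rintro ⟨f, g⟩ -; exact (bernoulliWeight_piecewise_mul q T f g).symm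
    _ = (∑ f ∈ E, bernoulliWeight q f) * ∑ f ∈ F, bernoulliWeight q f := by
        rw [sum_mul_sum, sum_product]

theorem sum_bernoulliWeight_le_pow [DecidableEq V] {t a r : ℝ} (hq₀ : 0 ≤ q) (hq₁ : q ≤ 1)
    (ht : 0 < t) (hr : t ^ (-a) * (q * t + (1 - q)) ≤ r) {T : Finset V} {E : Finset (V → Bool)}
    (hE : ∀ f ∈ E, t ^ (a * #T) ≤ t ^ #{v ∈ T | f v}) :
    ∑ f ∈ E, bernoulliWeight q f ≤ r ^ #T := by
  have hmarkov : t ^ (a * #T) * ∑ f ∈ E, bernoulliWeight q f ≤ (q * t + (1 - q)) ^ #T :=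
    calc t ^ (a * #T) * ∑ f ∈ E, bernoulliWeight q f
        ≤ ∑ f ∈ E, t ^ #{v ∈ T | f v} * bernoulliWeight q f := by
          rw [mul_sum]
          exact sum_le_sum fun f hf =>
            mul_le_mul_of_nonneg_right (hE f hf) (bernoulliWeight_nonneg hq₀ hq₁ f)
      _ ≤ ∑ f : V → Bool, t ^ #{v ∈ T | f v} * bernoulliWeight q f :=
          sum_le_sum_of_subset_of_nonneg (subset_univ E) fun f _ _ =>
            mul_nonneg (by positivity) (bernoulliWeight_nonneg hq₀ hq₁ f)
      _ = (q * t + (1 - q)) ^ #T := sum_pow_card_filter_mul_bernoulliWeight q t T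
  calc ∑ f ∈ E, bernoulliWeight q f
      ≤ t ^ (-a * #T) * (q * t + (1 - q)) ^ #T := by
        rw [neg_mul, Real.rpow_neg ht.le, inv_mul_eq_div, le_div_iff₀' (by positivity)]
        exact hmarkov
    _ = (t ^ (-a) * (q * t + (1 - q))) ^ #T := by rw [Real.rpow_mul_natCast ht.le, mul_pow]
    _ ≤ r ^ #T := pow_le_pow_left₀ (mul_nonneg (by positivity) (by nlinarith)) hr _

end BernoulliWeight

theorem rpow_neg_mul_le_rpow_neg {x y c a b : ℝ} (hx : 0 < x) (hy : 0 < y)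
    {n : ℕ} (hn : n ≠ 0) (m l : ℕ) (ha : a * n = m) (hb : b * n = l)
    (h : c ^ n * y ^ l ≤ x ^ m) : x ^ (-a) * c ≤ y ^ (-b) := by
  refine le_of_pow_le_pow_left₀ hn (by positivity) ?_
  rw [mul_pow, ← Real.rpow_mul_natCast hx.le, ← Real.rpow_mul_natCast hy.le, neg_mul, neg_mul,
    ha, hb, Real.rpow_neg hx.le, Real.rpow_neg hy.le, Real.rpow_natCast, Real.rpow_natCast,
    inv_mul_le_iff₀ (by positivity), ← div_eq_mul_inv, le_div_iff₀ (by positivity)]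
  exact h

/- The Chernoff exponents `0.1742` and `0.6516 = 1 - 0.3484` are rounded to `7/40` and `13/20`,
in the direction the tail events allow, so that the numerical checks only involve 40th powers. -/
theorem lowerTail_base_le :
    (0.31 : ℝ) ^ (-(7 / 40) : ℝ) * (0.405 * 0.31 + (1 - 0.405)) ≤ 2 ^ (-0.1742 : ℝ) :=
  (rpow_neg_mul_le_rpow_neg (b := 7 / 40) (n := 40) (by norm_num) (by norm_num) (by norm_num)
    7 7 (by norm_num) (by norm_num) (by norm_num)).trans
    (Real.rpow_le_rpow_of_exponent_le (by norm_num) (by norm_num))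

theorem upperTail_base_le :
    (2.75 : ℝ) ^ (-(13 / 20) : ℝ) * (0.405 * 2.75 + (1 - 0.405)) ≤ 2 ^ (-0.1742 : ℝ) :=
  (rpow_neg_mul_le_rpow_neg (b := 7 / 40) (n := 40) (by norm_num) (by norm_num) (by norm_num)
    26 7 (by norm_num) (by norm_num) (by norm_num)).trans
    (Real.rpow_le_rpow_of_exponent_le (by norm_num) (by norm_num))

section VariableSetting

open LovaszLocal

variable {V ι : Type*} [Fintype V] [DecidableEq V] {q : ℝ}

theorem dependsOn_mem_avoiding {A : ι → Finset (V → Bool)} {S : Finset ι} {s : Set V}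
    (hA : ∀ j ∈ S, DependsOn (· ∈ A j) s) : DependsOn (· ∈ avoiding A S) s := by
  intro f g hfg
  simp only [avoiding, mem_filter, mem_univ, true_and, eq_iff_iff]
  exact forall₂_congr fun j hj => not_congr (hA j hj hfg).to_iff

theorem sum_inter_avoiding_le_mul (hq₀ : 0 ≤ q) (hq₁ : q ≤ 1) {vbl : ι → Finset V}
    {A : ι → Finset (V → Bool)} (hA : ∀ i, DependsOn (· ∈ A i) (vbl i)) {p : ℝ} {i : ι}
    (hAi : ∑ f ∈ A i, bernoulliWeight q f ≤ p) {S : Finset ι}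
    (hS : ∀ j ∈ S, Disjoint (vbl i) (vbl j)) :
    ∑ f ∈ A i ∩ avoiding A S, bernoulliWeight q f ≤
      p * ∑ f ∈ avoiding A S, bernoulliWeight q f := by
  have hindep : DependsOn (· ∈ avoiding A S) (vbl i : Set V)ᶜ :=
    dependsOn_mem_avoiding fun j hj => (hA j).mono <|
      Set.subset_compl_iff_disjoint_left.mpr (by exact_mod_cast (hS j hj))
  rw [sum_inter_bernoulliWeight (hA i) hindep]
  exact mul_le_mul_of_nonneg_right hAi (sum_nonneg fun f _ => bernoulliWeight_nonneg hq₀ hq₁ f)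

theorem exists_forall_notMem_of_dependsOn [Fintype ι] [DecidableEq ι] (hq₀ : 0 ≤ q)
    (hq₁ : q ≤ 1) (vbl : ι → Finset V) (A : ι → Finset (V → Bool))
    (hA : ∀ i, DependsOn (· ∈ A i) (vbl i))
    {p : ℝ} (hp : 0 ≤ p) (hAp : ∀ i, ∑ f ∈ A i, bernoulliWeight q f ≤ p)
    (hvbl : ∀ i, (vbl i).Nonempty) {D : ℕ} (hD : ∀ i, #{j | (vbl i ∩ vbl j).Nonempty} ≤ D)
    (hpD : 4 * p * D ≤ 1) :
    ∃ f, ∀ i, f ∉ A i := by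
  refine exists_forall_notMem (N := fun i => {j | (vbl i ∩ vbl j).Nonempty})
    (fun f => bernoulliWeight_nonneg hq₀ hq₁ f) hp (fun i => by simpa using hvbl i) hD hpD
    (fun i S hS => sum_inter_avoiding_le_mul hq₀ hq₁ hA (hAp i) fun j hj => ?_)
    (by rw [sum_bernoulliWeight]; exact one_pos)
  have : j ∉ ({j | (vbl i ∩ vbl j).Nonempty} : Finset ι) := disjoint_left.mp hS hj
  simpa [not_nonempty_iff_eq_empty, disjoint_iff_inter_eq_empty] using this

end VariableSetting

section Marking

variable {V : Type*} [Fintype V] [DecidableEq V]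

noncomputable def badMarking (T : Finset V) : Finset (V → Bool) :=
  {f | (#{v ∈ T | f v} : ℝ) < 0.1742 * #T ∨ (#{v ∈ T | ¬ f v} : ℝ) < 0.3484 * #T}

theorem dependsOn_mem_badMarking (T : Finset V) : DependsOn (· ∈ badMarking T) T := by
  intro f g hfg
  have hfilter : ∀ b : Bool, {v ∈ T | f v = b} = {v ∈ T | g v = b} := fun b =>
    filter_congr fun v hv => by rw [hfg v hv]
  simp only [badMarking, mem_filter, mem_univ, true_and, Bool.not_eq_true]
  rw [hfilter, hfilter]

theorem sum_badMarking_le (T : Finset V) :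
    ∑ f ∈ badMarking T, bernoulliWeight 0.405 f ≤ 2 * (2 ^ (-0.1742 : ℝ)) ^ #T := by
  have hq₀ : (0 : ℝ) ≤ 0.405 := by norm_num
  have hq₁ : (0.405 : ℝ) ≤ 1 := by norm_num
  have hsplit : ∀ f : V → Bool, (#{v ∈ T | ¬ f v} : ℝ) = #T - #{v ∈ T | f v} := by
    intro f
    rw [eq_sub_iff_add_eq, add_comm]; exact_mod_cast card_filter_add_card_filter_not _
  have hlower : ∑ f ∈ {f | (#{v ∈ T | f v} : ℝ) < 0.1742 * #T}, bernoulliWeight 0.405 f ≤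
      (2 ^ (-0.1742 : ℝ)) ^ #T := by
    refine sum_bernoulliWeight_le_pow hq₀ hq₁ (by norm_num) lowerTail_base_le fun f hf => ?_
    rw [← Real.rpow_natCast]
    simp only [mem_filter, mem_univ, true_and] at hf
    exact Real.rpow_le_rpow_of_exponent_ge (by norm_num) (by norm_num) (by linarith)
  have hupper :
      ∑ f ∈ {f | (#{v ∈ T | ¬ f v} : ℝ) < 0.3484 * #T}, bernoulliWeight 0.405 f ≤
        (2 ^ (-0.1742 : ℝ)) ^ #T := by
    refine sum_bernoulliWeight_le_pow hq₀ hq₁ (by norm_num) upperTail_base_le fun f hf => ?_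
    rw [← Real.rpow_natCast]
    simp only [mem_filter, mem_univ, true_and, hsplit] at hf
    exact Real.rpow_le_rpow_of_exponent_le (by norm_num) (by linarith)
  rw [badMarking, filter_or]
  linarith [sum_union_le_of_nonneg (bernoulliWeight_nonneg hq₀ hq₁)
    ({f | (#{v ∈ T | f v} : ℝ) < 0.1742 * #T} : Finset (V → Bool))
    ({f | (#{v ∈ T | ¬ f v} : ℝ) < 0.3484 * #T} : Finset (V → Bool))]

end Marking

/-- **Existence of a good marking in the regime `Δ ≲ 2^{0.1742·k}/k²`.**
There is an absolute constant `c > 0` such that for every integer `k ≥ 2` the following holds.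
`𝒞` is a family of constraints (indexed by `ι`) on a finite variable set `V`, each with
variable set of size exactly `k`, and each sharing a variable with at most `Δ` constraints in
total (including itself).  If `Δ ≤ c·2^{0.1742·k}/k²`, then there is a subset `V₁ ⊆ V` such
that every constraint `C` satisfies `|V₁ ∩ vbl(C)| ≥ 0.1742·k` and
`|vbl(C) \ V₁| ≥ 0.3484·k`. -/
theorem stmt_10 :
    ∃ c : ℝ, 0 < c ∧
      ∀ k : ℕ, 2 ≤ k →
      ∀ (V : Type) [Fintype V] [DecidableEq V] (ι : Type) [Fintype ι]
        (vbl : ι → Finset V) (Δ : ℕ),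
        (∀ C, (vbl C).card = k) →
        (∀ C : ι, ((univ : Finset ι).filter fun C' => (vbl C ∩ vbl C').Nonempty).card ≤ Δ) →
        (Δ : ℝ) ≤ c * (2 : ℝ) ^ (0.1742 * (k : ℝ)) / (k : ℝ) ^ 2 →
        ∃ V₁ : Finset V, ∀ C : ι,
          0.1742 * (k : ℝ) ≤ ((V₁ ∩ vbl C).card : ℝ) ∧
          0.3484 * (k : ℝ) ≤ (((vbl C) \ V₁).card : ℝ) := by
  refine ⟨1 / 8, by norm_num, fun k hk V _ _ ι _ vbl Δ hcard hdeg hΔ => ?_⟩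
  classical
  have hbase : (2 ^ (-0.1742 : ℝ)) ^ k = ((2 : ℝ) ^ (0.1742 * (k : ℝ)))⁻¹ := by
    rw [← Real.rpow_mul_natCast (by norm_num), neg_mul, Real.rpow_neg (by norm_num)]
  have hX : (0 : ℝ) < 2 ^ (0.1742 * (k : ℝ)) := by positivity
  have hpΔ : 4 * (2 * (2 ^ (-0.1742 : ℝ)) ^ k) * (Δ : ℝ) ≤ 1 := by
    have hk₂ : (1 : ℝ) ≤ (k : ℝ) ^ 2 := by exact_mod_cast Nat.one_le_pow _ _ (by omega)
    rw [le_div_iff₀ (by positivity)] at hΔ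
    rw [hbase, ← div_eq_mul_inv, show ∀ X : ℝ, 4 * (2 / X) * Δ = 8 * Δ / X by intro X; ring,
      div_le_one hX]
    nlinarith [Nat.cast_nonneg (α := ℝ) Δ]
  obtain ⟨f, hf⟩ := exists_forall_notMem_of_dependsOn (q := 0.405) (by norm_num) (by norm_num)
    vbl (fun C => badMarking (vbl C)) (fun C => dependsOn_mem_badMarking (vbl C)) (by positivity)
    (fun C => hcard C ▸ sum_badMarking_le (vbl C))
    (fun C => card_pos.mp (by rw [hcard]; omega)) hdeg hpΔ
  refine ⟨({v | f v} : Finset V), fun C => ?_⟩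
  have h₁ : ({v | f v} : Finset V) ∩ vbl C = {v ∈ vbl C | f v} := by ext; simp [and_comm]
  have h₂ : vbl C \ ({v | f v} : Finset V) = {v ∈ vbl C | ¬ f v} := by ext; simp
  simpa [badMarking, hcard, h₁, h₂] using hf C
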